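/- arXiv:1005.1027 — 5 statements merged into one kernel-verified Lean document; each statement's English description precedes it below -/
import Mathlib

section
/- Let k ≥ 1 and let f : ℝ^k → ℝ be absolutely continuous in k dimensions. Then for each i ∈ {1,…,k}, the set { x ∈ ℝ^k : f(x) = 0, the partial derivative ∂_{x_i} f(x) exists, and ∂_{x_i} f(x) ≠ 0 } has λ^k-measure zero. -/
open MeasureTheory Filter Topology
open scoped ENNReal NNReal

noncomputable section

/-- `ℝ^k` with the Euclidean norm and Lebesgue measure. -/
abbrev Euc (k : ℕ) := EuclideanSpace ℝ (Fin k)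

/-- The coordinatewise logistic compactification map `ℓ(x)ᵢ = e^{xᵢ}/(e^{xᵢ}+1)`. -/
def ellk (k : ℕ) (x : Euc k) : Euc k := WithLp.toLp 2 (fun i => Real.exp (x i) / (Real.exp (x i) + 1))

/-- The test-function class `𝒟_k`: functions `φ = ψ ∘ ℓ` for some smooth `ψ : ℝ^k → ℝ`. -/
def MemDk (k : ℕ) (φ : Euc k → ℝ) : Prop :=
  ∃ ψ : Euc k → ℝ, ContDiff ℝ (⊤ : ℕ∞) ψ ∧ φ = fun x => ψ (ellk k x)

/-- Absolute continuity of `g : ℝ → ℝ` (on every compact interval), via the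
indefinite-integral characterization. -/
def IsAC (g : ℝ → ℝ) : Prop :=
  ∃ u : ℝ → ℝ, LocallyIntegrable u volume ∧ ∀ x : ℝ, g x = g 0 + ∫ t in (0:ℝ)..x, u t

/-- Absolute continuity in `k` dimensions: for each coordinate direction `i` and
(Lebesgue-)almost every point `z`, the section `x ↦ f (z with i-th coordinate x)`
is absolutely continuous. (Since this condition only depends on the remaining `k-1`
coordinates of `z`, this is the usual formulation with a `λ^{k-1}`-null exceptional
set `N_i` of sections.) -/
def ACk (k : ℕ) (f : Euc k → ℝ) : Prop :=
  ∀ i : Fin k, ∀ᵐ z : Euc k ∂volume, IsAC (fun x => f (WithLp.toLp 2 (Function.update z i x)))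

/-- The `i`-th partial derivative of `f : ℝ^k → ℝ`, as the derivative of the section. -/
def pderiv' (k : ℕ) (i : Fin k) (f : Euc k → ℝ) (x : Euc k) : ℝ :=
  deriv (fun t => f (WithLp.toLp 2 (Function.update x i t))) (x i)

lemma IsAC.continuous {g : ℝ → ℝ} (h : IsAC g) : Continuous g := by
  obtain ⟨u, hu, hg⟩ := h
  have hrep : g = fun x => g 0 + ∫ t in (0:ℝ)..x, u t := funext hg
  rw [hrep]
  exact continuous_const.add (intervalIntegral.continuous_primitive
    (fun a b => (hu.integrableOn_isCompact isCompact_uIcc).intervalIntegrable) 0)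

section FinHelpers
variable {n : ℕ} {α : Type*}

lemma update_insertNth (i : Fin (n+1)) (y : Fin n → α) (t₀ t : α) :
    Function.update (Fin.insertNth (α := fun _ => α) i t₀ y) i t
      = Fin.insertNth (α := fun _ => α) i t y := by
  funext j
  rcases eq_or_ne j i with rfl | h
  · simp
  · obtain ⟨j', rfl⟩ := Fin.exists_succAbove_eq h
    rw [Function.update_of_ne (Fin.succAbove_ne i j'), Fin.insertNth_apply_succAbove,
      Fin.insertNth_apply_succAbove]

lemma insertNth_eq_update (i : Fin (n+1)) (z : Fin (n+1) → α) (t : α) :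
    i.insertNth t (fun j => z (i.succAbove j)) = Function.update z i t := by
  funext j
  rcases eq_or_ne j i with rfl | h
  · simp
  · obtain ⟨j', rfl⟩ := Fin.exists_succAbove_eq h
    rw [Fin.insertNth_apply_succAbove, Function.update_of_ne (Fin.succAbove_ne i j')]

lemma update_insertNth_succAbove (i : Fin (n+1)) (j : Fin n) (y : Fin n → α) (t₀ s : α) :
    Function.update (Fin.insertNth (α := fun _ => α) i t₀ y) (i.succAbove j) s
      = Fin.insertNth (α := fun _ => α) i t₀ (Function.update y j s) := by
  funext l
  rcases eq_or_ne l (i.succAbove j) with rfl | h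
  · simp
  · rw [Function.update_of_ne h]
    rcases eq_or_ne l i with rfl | h2
    · simp
    · obtain ⟨l', rfl⟩ := Fin.exists_succAbove_eq h2
      have hlj : l' ≠ j := by
        rintro rfl; exact h rfl
      rw [Fin.insertNth_apply_succAbove, Fin.insertNth_apply_succAbove,
        Function.update_of_ne hlj]

example (i : Fin (n+1)) [MeasurableSpace α] (z : Fin (n+1) → α) :
    (MeasurableEquiv.piFinSuccAbove (fun _ : Fin (n+1) => α) i) z
      = (z i, fun j => z (i.succAbove j)) := rfl

example (i : Fin (n+1)) [MeasurableSpace α] (p : α × (Fin n → α)) :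
    (MeasurableEquiv.piFinSuccAbove (fun _ : Fin (n+1) => α) i).symm p
      = i.insertNth p.1 p.2 := rfl

end FinHelpers

-- measure preserving, generic i
lemma hmp_i (m : ℕ) (i : Fin (m+1)) :
    MeasurePreserving (MeasurableEquiv.piFinSuccAbove (fun _ : Fin (m+1) => ℝ) i)
      (volume : Measure (Fin (m+1) → ℝ))
      ((volume : Measure ℝ).prod (volume : Measure (Fin m → ℝ))) := by
  simpa [volume_pi] using
    measurePreserving_piFinSuccAbove (fun _ : Fin (m+1) => (volume : Measure ℝ)) i

lemma ae_insert_of_ae (m : ℕ) (i : Fin (m+1)) (p : (Fin (m+1) → ℝ) → Prop)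
    (h : ∀ᵐ z ∂(volume : Measure (Fin (m+1) → ℝ)), p z) :
    ∀ᵐ t₀ ∂(volume : Measure ℝ), ∀ᵐ y ∂(volume : Measure (Fin m → ℝ)),
      p (i.insertNth t₀ y) := by
  set e := MeasurableEquiv.piFinSuccAbove (fun _ : Fin (m+1) => ℝ) i
  have hprod : ∀ᵐ q ∂((volume : Measure ℝ).prod (volume : Measure (Fin m → ℝ))),
      p (e.symm q) := by
    rw [ae_iff, ← (hmp_i m i).map_eq, e.map_apply]
    have : e ⁻¹' {q | ¬ p (e.symm q)} = {z | ¬ p z} := by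
      ext z; simp
    rw [this]
    exact ae_iff.1 h
  exact Measure.ae_ae_of_ae_prod hprod

lemma volume_real_ne_zero : (volume : Measure ℝ) ≠ 0 := by
  intro h
  have h1 : (volume : Measure ℝ) (Set.Ioo 0 1) = 0 := by rw [h]; rfl
  rw [Real.volume_Ioo] at h1
  simp [ENNReal.ofReal_eq_zero] at h1

lemma aemeasurable_of_ae_cont_sections :
    ∀ (k : ℕ) (f : (Fin k → ℝ) → ℝ),
    (∀ i : Fin k, ∀ᵐ z ∂(volume : Measure (Fin k → ℝ)),
      Continuous fun t => f (Function.update z i t)) →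
    AEMeasurable f (volume : Measure (Fin k → ℝ)) := by
  intro k
  induction k with
  | zero =>
    intro f _
    exact Subsingleton.measurable.aemeasurable
  | succ m IH =>
    intro f hsec
    set F : ℝ × (Fin m → ℝ) → ℝ :=
      fun p => f (Fin.insertNth (α := fun _ => ℝ) 0 p.1 p.2) with hF
    -- continuity of t ↦ F (t, y) for a.e. y
    have h0 : ∀ᵐ y ∂(volume : Measure (Fin m → ℝ)), Continuous fun t => F (t, y) := by
      have h1 := ae_insert_of_ae m 0 _ (hsec 0)
      haveI : (ae (volume : Measure ℝ)).NeBot := ae_neBot.2 volume_real_ne_zero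
      obtain ⟨t₀, ht₀⟩ := h1.exists
      filter_upwards [ht₀] with y hy
      have : (fun t => F (t, y))
          = fun t => f (Function.update (Fin.insertNth (α := fun _ => ℝ) 0 t₀ y) 0 t) := by
        funext t
        rw [update_insertNth]
      rw [this]
      exact hy
    -- slices are a.e. measurable
    have hmeas_slices : ∀ᵐ t₀ ∂(volume : Measure ℝ),
        AEMeasurable (fun y => F (t₀, y)) (volume : Measure (Fin m → ℝ)) := by
      have hslices : ∀ᵐ t₀ ∂(volume : Measure ℝ), ∀ j : Fin m,
          ∀ᵐ y ∂(volume : Measure (Fin m → ℝ)),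
          Continuous fun s => F (t₀, Function.update y j s) := by
        rw [ae_all_iff]
        intro j
        have h1 := ae_insert_of_ae m 0 _ (hsec ((0 : Fin (m+1)).succAbove j))
        filter_upwards [h1] with t₀ ht₀
        filter_upwards [ht₀] with y hy
        have : (fun s => F (t₀, Function.update y j s))
            = fun s => f (Function.update (Fin.insertNth (α := fun _ => ℝ) 0 t₀ y)
                ((0 : Fin (m+1)).succAbove j) s) := by
          funext s
          rw [update_insertNth_succAbove]
        rw [this]
        exact hy
      filter_upwards [hslices] with t₀ h
      exact IH _ h
    -- choose dyadic representatives
    have hDc : (volume : Measure ℝ)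
        {t₀ | ¬ AEMeasurable (fun y => F (t₀, y)) (volume : Measure (Fin m → ℝ))} = 0 :=
      ae_iff.1 hmeas_slices
    have hpick : ∀ (n : ℕ) (q : ℤ), ∃ c : ℝ,
        AEMeasurable (fun y => F (c, y)) (volume : Measure (Fin m → ℝ)) ∧
        (q : ℝ)/2^n ≤ c ∧ c < ((q : ℝ)+1)/2^n := by
      intro n q
      by_contra hcon
      push_neg at hcon
      have h2 : (0:ℝ) < 2^n := by positivity
      have hsub : Set.Ico ((q:ℝ)/2^n) (((q:ℝ)+1)/2^n)
          ⊆ {t₀ | ¬ AEMeasurable (fun y => F (t₀, y)) (volume : Measure (Fin m → ℝ))} := by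
        intro c hc hcD
        exact absurd (hcon c hcD hc.1) (not_le.2 hc.2)
      have hnull := measure_mono_null hsub hDc
      rw [Real.volume_Ico, ENNReal.ofReal_eq_zero] at hnull
      have : ((q:ℝ)+1)/2^n - (q:ℝ)/2^n = 1/2^n := by ring
      rw [this] at hnull
      have : (0:ℝ) < 1/2^n := by positivity
      linarith
    choose c hcD hc1 hc2 using hpick
    have hgmex : ∀ (n : ℕ) (q : ℤ), ∃ g : (Fin m → ℝ) → ℝ, Measurable g ∧
        ∀ᵐ y ∂(volume : Measure (Fin m → ℝ)), F (c n q, y) = g y :=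
      fun n q => ⟨(hcD n q).mk _, (hcD n q).measurable_mk, (hcD n q).ae_eq_mk⟩
    choose gm hgm_meas hgm_ae using hgmex
    set G : ℕ → ℝ × (Fin m → ℝ) → ℝ := fun n p => gm n ⌊p.1 * 2^n⌋ p.2 with hG
    have hGmeas : ∀ n, Measurable (G n) := by
      intro n
      have h1 : Measurable fun qy : (Fin m → ℝ) × ℤ => gm n qy.2 qy.1 :=
        measurable_from_prod_countable_left (fun q => hgm_meas n q)
      have h2 : Measurable fun p : ℝ × (Fin m → ℝ) => (p.2, ⌊p.1 * 2^n⌋) :=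
        measurable_snd.prodMk ((measurable_fst.mul_const _).floor)
      exact h1.comp h2
    -- a.e. convergence
    have hconv : ∀ᵐ p ∂((volume : Measure ℝ).prod (volume : Measure (Fin m → ℝ))),
        Tendsto (fun n => G n p) atTop (nhds (F p)) := by
      set Q0 : Set (Fin m → ℝ) :=
        toMeasurable volume {y | ¬ Continuous fun t => F (t, y)} with hQ0def
      have hQ0 : (volume : Measure (Fin m → ℝ)) Q0 = 0 := by
        rw [hQ0def, measure_toMeasurable]
        exact ae_iff.1 h0
      set E : ℕ → ℤ → Set (Fin m → ℝ) :=
        fun n q => toMeasurable volume {y | ¬ F (c n q, y) = gm n q y} with hEdef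
      have hE : ∀ n q, (volume : Measure (Fin m → ℝ)) (E n q) = 0 := by
        intro n q
        rw [hEdef, measure_toMeasurable]
        exact ae_iff.1 (hgm_ae n q)
      set B : Set (ℝ × (Fin m → ℝ)) :=
        (Set.univ ×ˢ Q0) ∪ ⋃ n : ℕ, ⋃ q : ℤ, Set.univ ×ˢ E n q with hBdef
      have hB : ((volume : Measure ℝ).prod (volume : Measure (Fin m → ℝ))) B = 0 := by
        apply measure_union_null
        · rw [Measure.prod_prod, hQ0, mul_zero]
        · refine measure_iUnion_null fun n => measure_iUnion_null fun q => ?_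
          rw [Measure.prod_prod, hE, mul_zero]
      have main : ∀ p : ℝ × (Fin m → ℝ), p.2 ∉ Q0 → (∀ n q, p.2 ∉ E n q) →
          Tendsto (fun n => G n p) atTop (nhds (F p)) := by
        intro p hQ hE'
        have hcontp : Continuous fun t => F (t, p.2) := by
          by_contra hcnot
          exact hQ (subset_toMeasurable _ _ hcnot)
        have hGeq : ∀ n, G n p = F (c n ⌊p.1 * 2^n⌋, p.2) := by
          intro n
          have hx : ¬ ¬ F (c n ⌊p.1 * 2^n⌋, p.2) = gm n ⌊p.1 * 2^n⌋ p.2 :=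
            fun hne => hE' n _ (subset_toMeasurable _ _ hne)
          exact (not_not.1 hx).symm
        have hb : ∀ n : ℕ, |c n ⌊p.1 * 2^n⌋ - p.1| ≤ (1/2 : ℝ)^n := by
          intro n
          have h2 : (0:ℝ) < 2^n := by positivity
          have hfl : (⌊p.1 * 2^n⌋ : ℝ) ≤ p.1 * 2^n := Int.floor_le _
          have hfl2 : p.1 * 2^n < ⌊p.1 * 2^n⌋ + 1 := Int.lt_floor_add_one _
          have hca := hc1 n ⌊p.1 * 2^n⌋
          have hcb := hc2 n ⌊p.1 * 2^n⌋
          have h3 : (⌊p.1 * 2^n⌋ : ℝ) ≤ c n ⌊p.1 * 2^n⌋ * 2^n := (div_le_iff₀ h2).1 hca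
          have h4 : c n ⌊p.1 * 2^n⌋ * 2^n < (⌊p.1 * 2^n⌋ : ℝ) + 1 := (lt_div_iff₀ h2).1 hcb
          have hpow : (1/2 : ℝ)^n = 1/2^n := by rw [div_pow, one_pow]
          rw [hpow, abs_le]
          constructor
          · rw [neg_le, le_div_iff₀ h2]
            nlinarith
          · rw [sub_le_iff_le_add]
            rw [div_add' _ _ _ (ne_of_gt h2), le_div_iff₀ h2]
            nlinarith
        have hczero : Tendsto (fun n : ℕ => c n ⌊p.1 * 2^n⌋ - p.1) atTop (nhds 0) :=
          squeeze_zero_norm hb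
            (tendsto_pow_atTop_nhds_zero_of_lt_one (by norm_num) (by norm_num))
        have hctend : Tendsto (fun n : ℕ => c n ⌊p.1 * 2^n⌋) atTop (nhds p.1) := by
          have := hczero.add (tendsto_const_nhds (x := p.1))
          simpa using this
        have hend : Tendsto (fun n => F (c n ⌊p.1 * 2^n⌋, p.2)) atTop (nhds (F (p.1, p.2))) :=
          (hcontp.tendsto p.1).comp hctend
        rw [show F p = F (p.1, p.2) from rfl]
        exact hend.congr fun n => (hGeq n).symm
      rw [ae_iff]
      apply measure_mono_null _ hB
      intro p hp
      by_contra hpB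
      simp only [Set.mem_setOf_eq] at hp
      refine hp (main p ?_ ?_)
      · intro h
        exact hpB (Set.mem_union_left _ (Set.mem_prod.2 ⟨Set.mem_univ _, h⟩))
      · intro n q h
        exact hpB (Set.mem_union_right _
          (Set.mem_iUnion.2 ⟨n, Set.mem_iUnion.2 ⟨q, Set.mem_prod.2 ⟨Set.mem_univ _, h⟩⟩⟩))
    have hFae : AEMeasurable F ((volume : Measure ℝ).prod (volume : Measure (Fin m → ℝ))) :=
      aemeasurable_of_tendsto_metrizable_ae _ (fun n => (hGmeas n).aemeasurable) hconv
    have hfeq : f = F ∘ (MeasurableEquiv.piFinSuccAbove (fun _ : Fin (m+1) => ℝ) 0) := by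
      funext z
      show f z = f (Fin.insertNth (α := fun _ => ℝ) 0 (z 0)
        (fun j => z ((0 : Fin (m+1)).succAbove j)))
      rw [insertNth_eq_update, Function.update_eq_self]
    rw [hfeq]
    exact hFae.comp_quasiMeasurePreserving (hmp_i m 0).quasiMeasurePreserving

variable {Y : Type*} [MeasurableSpace Y]

lemma prod_key (ν : Measure Y) [SigmaFinite ν] (F : ℝ × Y → ℝ)
    (hF : AEMeasurable F ((volume : Measure ℝ).prod ν))
    (hcont : ∀ᵐ y ∂ν, Continuous fun t => F (t, y)) :
    ((volume : Measure ℝ).prod ν) {p : ℝ × Y | F p = 0 ∧ ∃ d : ℝ, d ≠ 0 ∧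
      HasDerivAt (fun t => F (t, p.2)) d p.1} = 0 := by
  classical
  set G : ℝ × Y → ℝ := hF.mk F with hGdef
  have hG : Measurable G := hF.measurable_mk
  have hFG : ∀ᵐ p ∂((volume : Measure ℝ).prod ν), F p = G p := hF.ae_eq_mk
  set N : Set (ℝ × Y) := toMeasurable ((volume : Measure ℝ).prod ν) {p | ¬ F p = G p} with hNdef
  have hNmeas : MeasurableSet N := measurableSet_toMeasurable _ _
  have hNmem : ∀ p : ℝ × Y, F p ≠ G p → p ∈ N := fun p hp => subset_toMeasurable _ _ hp
  have hN0 : ((volume : Measure ℝ).prod ν) N = 0 := by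
    rw [hNdef, measure_toMeasurable]; exact ae_iff.1 hFG
  -- sections of N are a.e. null
  have hNsec : ∀ᵐ y ∂ν, (volume : Measure ℝ) {t | (t, y) ∈ N} = 0 := by
    have hsw : MeasurableSet (Prod.swap ⁻¹' N : Set (Y × ℝ)) := hNmeas.preimage measurable_swap
    have h1 : (ν.prod (volume : Measure ℝ)) (Prod.swap ⁻¹' N) = 0 := by
      have h2 : (ν.prod (volume : Measure ℝ)) (Prod.swap ⁻¹' N)
          = ((volume : Measure ℝ).prod ν) N := by
        rw [← Measure.prod_swap, Measure.map_apply measurable_swap hsw,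
          show Prod.swap ⁻¹' (Prod.swap ⁻¹' N : Set (Y × ℝ)) = N by ext p; simp]
      rw [h2, hN0]
    have h3 := (Measure.measure_prod_null hsw).1 h1
    filter_upwards [h3] with y hy
    exact hy
  -- the "good" points
  have hGood : ∀ᵐ y ∂ν, (Continuous fun t => F (t, y)) ∧
      (volume : Measure ℝ) {t | (t, y) ∈ N} = 0 := hcont.and hNsec
  -- the auxiliary measurable conditions
  set P : Y → ℚ → ℚ → Prop := fun y a b => ∃ M : ℕ,
    (volume : Measure ℝ) {s : ℝ | s ∈ Set.Icc (a:ℝ) (b:ℝ) ∧ |G (s, y)| < 1/(M+1)} = 0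
    with hPdef
  set Zc : ℝ × Y → Prop := fun p => ∀ n M : ℕ,
    0 < (volume : Measure ℝ) {s : ℝ | s ∈ Set.Ioo (p.1 - 1/(n+1)) (p.1 + 1/(n+1)) ∧
      |G (s, p.2)| < 1/(M+1)} with hZdef
  set T : ℚ → ℚ → Set (ℝ × Y) := fun pq qq => {p : ℝ × Y | p.1 ∈ Set.Ioo (pq:ℝ) (qq:ℝ) ∧
    Zc p ∧ ∀ a b : ℚ, pq < a → a < b → b < qq → ((b:ℝ) < p.1 ∨ p.1 < (a:ℝ)) → P p.2 a b}
    with hTdef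
  -- measurability of P sets
  have hPmeas : ∀ a b : ℚ, MeasurableSet {y : Y | P y a b} := by
    intro a b
    have h1 : ∀ M : ℕ, Measurable fun y : Y =>
        (volume : Measure ℝ) {s : ℝ | s ∈ Set.Icc (a:ℝ) (b:ℝ) ∧ |G (s, y)| < 1/(M+1)} := by
      intro M
      have hA : MeasurableSet {q : Y × ℝ | q.2 ∈ Set.Icc (a:ℝ) (b:ℝ) ∧ |G (q.2, q.1)| < 1/(M+1)} := by
        refine MeasurableSet.inter ?_ ?_
        · exact measurable_snd measurableSet_Icc
        · have : Measurable fun q : Y × ℝ => |G (q.2, q.1)| :=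
            (hG.comp measurable_swap).abs
          exact measurableSet_lt this measurable_const
      have := measurable_measure_prodMk_left (ν := (volume : Measure ℝ)) hA
      exact this
    have : {y : Y | P y a b} = ⋃ M : ℕ, (fun y : Y =>
        (volume : Measure ℝ) {s : ℝ | s ∈ Set.Icc (a:ℝ) (b:ℝ) ∧ |G (s, y)| < 1/(M+1)}) ⁻¹' {0} := by
      ext y; simp [hPdef, Set.mem_iUnion]
    rw [this]
    exact MeasurableSet.iUnion fun M => (h1 M) (measurableSet_singleton 0)
  -- measurability of the Z set
  have hZmeas : MeasurableSet {p : ℝ × Y | Zc p} := by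
    have h1 : ∀ n M : ℕ, Measurable fun p : ℝ × Y =>
        (volume : Measure ℝ) {s : ℝ | s ∈ Set.Ioo (p.1 - 1/(n+1)) (p.1 + 1/(n+1)) ∧
          |G (s, p.2)| < 1/(M+1)} := by
      intro n M
      have hA : MeasurableSet {q : (ℝ × Y) × ℝ |
          q.2 ∈ Set.Ioo (q.1.1 - 1/(n+1)) (q.1.1 + 1/(n+1)) ∧ |G (q.2, q.1.2)| < 1/(M+1)} := by
        refine MeasurableSet.inter ?_ ?_
        · have h2 : MeasurableSet {q : (ℝ × Y) × ℝ | q.1.1 - 1/(n+1) < q.2} :=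
            measurableSet_lt ((measurable_fst.fst).sub measurable_const) measurable_snd
          have h3 : MeasurableSet {q : (ℝ × Y) × ℝ | q.2 < q.1.1 + 1/(n+1)} :=
            measurableSet_lt measurable_snd ((measurable_fst.fst).add measurable_const)
          exact h2.inter h3
        · have : Measurable fun q : (ℝ × Y) × ℝ => |G (q.2, q.1.2)| :=
            (hG.comp (measurable_snd.prodMk measurable_fst.snd)).abs
          exact measurableSet_lt this measurable_const
      exact measurable_measure_prodMk_left (ν := (volume : Measure ℝ)) hA
    have : {p : ℝ × Y | Zc p} = ⋂ n : ℕ, ⋂ M : ℕ, {p : ℝ × Y |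
        0 < (volume : Measure ℝ) {s : ℝ | s ∈ Set.Ioo (p.1 - 1/(n+1)) (p.1 + 1/(n+1)) ∧
          |G (s, p.2)| < 1/(M+1)}} := by
      ext p; simp [hZdef]
    rw [this]
    exact MeasurableSet.iInter fun n => MeasurableSet.iInter fun M =>
      measurableSet_lt measurable_const (h1 n M)
  -- measurability of T
  have hTmeas : ∀ pq qq : ℚ, MeasurableSet (T pq qq) := by
    intro pq qq
    have h1 : MeasurableSet {p : ℝ × Y | p.1 ∈ Set.Ioo (pq:ℝ) (qq:ℝ)} :=
      measurable_fst measurableSet_Ioo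
    have h2 : MeasurableSet {p : ℝ × Y | ∀ a b : ℚ, pq < a → a < b → b < qq →
        ((b:ℝ) < p.1 ∨ p.1 < (a:ℝ)) → P p.2 a b} := by
      have : {p : ℝ × Y | ∀ a b : ℚ, pq < a → a < b → b < qq →
          ((b:ℝ) < p.1 ∨ p.1 < (a:ℝ)) → P p.2 a b}
          = ⋂ a : ℚ, ⋂ b : ℚ, {p : ℝ × Y | pq < a → a < b → b < qq →
            ((b:ℝ) < p.1 ∨ p.1 < (a:ℝ)) → P p.2 a b} := by
        ext p; simp
      rw [this]
      refine MeasurableSet.iInter fun a => MeasurableSet.iInter fun b => ?_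
      by_cases hab : pq < a ∧ a < b ∧ b < qq
      · have : {p : ℝ × Y | pq < a → a < b → b < qq →
            ((b:ℝ) < p.1 ∨ p.1 < (a:ℝ)) → P p.2 a b}
            = {p : ℝ × Y | (b:ℝ) < p.1 ∨ p.1 < (a:ℝ)}ᶜ ∪ (Prod.snd ⁻¹' {y : Y | P y a b}) := by
          ext p
          simp only [Set.mem_setOf_eq, Set.mem_union, Set.mem_compl_iff, Set.mem_preimage,
            hab.1, hab.2.1, hab.2.2, true_implies]
          tauto
        rw [this]
        refine MeasurableSet.union ?_ ((hPmeas a b).preimage measurable_snd)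
        refine MeasurableSet.compl ?_
        exact (measurableSet_lt measurable_const measurable_fst).union
          (measurableSet_lt measurable_fst measurable_const)
      · have : {p : ℝ × Y | pq < a → a < b → b < qq →
            ((b:ℝ) < p.1 ∨ p.1 < (a:ℝ)) → P p.2 a b} = Set.univ := by
          ext p
          simp only [Set.mem_setOf_eq, Set.mem_univ, iff_true]
          intro hA hB hC
          exact absurd ⟨hA, hB, hC⟩ hab
        rw [this]
        exact MeasurableSet.univ
    have : T pq qq = {p : ℝ × Y | p.1 ∈ Set.Ioo (pq:ℝ) (qq:ℝ)} ∩
        ({p : ℝ × Y | Zc p} ∩ {p : ℝ × Y | ∀ a b : ℚ, pq < a → a < b → b < qq →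
          ((b:ℝ) < p.1 ∨ p.1 < (a:ℝ)) → P p.2 a b}) := by
      ext p; simp only [hTdef, Set.mem_setOf_eq, Set.mem_inter_iff]
    rw [this]
    exact h1.inter (hZmeas.inter h2)
  -- semantic characterization of P on good fibers
  have keyP : ∀ y : Y, (Continuous fun t => F (t, y)) →
      (volume : Measure ℝ) {t | (t, y) ∈ N} = 0 → ∀ a b : ℚ, (a:ℝ) < (b:ℝ) →
      (P y a b ↔ ∀ s ∈ Set.Icc (a:ℝ) (b:ℝ), F (s, y) ≠ 0) := by
    intro y hcy hNy a b hab
    constructor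
    · rintro ⟨M, hM⟩ s hs hFs
      have hM1 : (0:ℝ) < 1/(M+1) := by positivity
      obtain ⟨δ, hδ, hballs⟩ := Metric.continuousAt_iff.1 (hcy.continuousAt (x := s)) _ hM1
      have hsmall : ∀ s' : ℝ, |s' - s| < δ → |F (s', y)| < 1/(M+1) := by
        intro s' hs'
        have := hballs (show dist s' s < δ by rwa [Real.dist_eq])
        rwa [Real.dist_eq, hFs, sub_zero] at this
      set J := Set.Ioo (max (a:ℝ) (s - δ)) (min (b:ℝ) (s + δ)) with hJdef
      have hJsub : J ⊆ {t : ℝ | t ∈ Set.Icc (a:ℝ) (b:ℝ) ∧ |G (t, y)| < 1/(M+1)}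
          ∪ {t | (t, y) ∈ N} := by
        intro t ht
        obtain ⟨ht1, ht2⟩ := ht
        have hta : (a:ℝ) < t := lt_of_le_of_lt (le_max_left _ _) ht1
        have htb : t < (b:ℝ) := lt_of_lt_of_le ht2 (min_le_left _ _)
        have htd : |t - s| < δ := by
          rw [abs_lt]
          constructor
          · have := lt_of_le_of_lt (le_max_right _ _) ht1
            linarith
          · have := lt_of_lt_of_le ht2 (min_le_right _ _)
            linarith
        have hFt := hsmall t htd
        rcases lt_or_ge (|G (t, y)|) (1/(M+1)) with h | h
        · exact Or.inl ⟨⟨le_of_lt hta, le_of_lt htb⟩, h⟩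
        · refine Or.inr (hNmem _ ?_)
          intro heq
          rw [heq] at hFt
          linarith
      have hJ0 : (volume : Measure ℝ) J = 0 := by
        refine measure_mono_null hJsub ?_
        exact measure_union_null hM hNy
      have hlt : max (a:ℝ) (s - δ) < min (b:ℝ) (s + δ) := by
        rcases hs with ⟨hsa, hsb⟩
        refine max_lt (lt_min hab (by linarith)) (lt_min (by linarith) (by linarith))
      rw [hJdef, Real.volume_Ioo, ENNReal.ofReal_eq_zero] at hJ0
      linarith
    · intro hne
      have hcomp : IsCompact (Set.Icc (a:ℝ) (b:ℝ)) := isCompact_Icc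
      have hne' : (Set.Icc (a:ℝ) (b:ℝ)).Nonempty := ⟨a, le_refl _, le_of_lt hab⟩
      obtain ⟨s₀, hs₀, hmin⟩ := hcomp.exists_isMinOn hne'
        ((hcy.abs).continuousOn (s := Set.Icc (a:ℝ) (b:ℝ)))
      have hε : 0 < |F (s₀, y)| := abs_pos.2 (hne s₀ hs₀)
      set M := ⌈1/|F (s₀, y)|⌉₊ with hMdef
      have hMle : 1/((M:ℝ)+1) < |F (s₀, y)| := by
        have h1 : (1:ℝ)/|F (s₀, y)| ≤ M := Nat.le_ceil _
        have h2 : (1:ℝ)/|F (s₀, y)| < M + 1 := by linarith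
        rw [div_lt_iff₀ hε] at h2
        rw [div_lt_iff₀ (by positivity : (0:ℝ) < (M:ℝ)+1)]
        linarith [mul_comm ((M:ℝ)+1) (|F (s₀, y)|)]
      refine ⟨M, ?_⟩
      refine measure_mono_null ?_ hNy
      rintro t ⟨htI, htG⟩
      have h5 : |F (s₀, y)| ≤ |F (t, y)| := hmin htI
      refine hNmem _ ?_
      intro heq
      rw [heq] at h5
      have : ((M:ℝ)+1) = ((M:ℕ):ℝ)+1 := by norm_num
      rw [this] at hMle
      push_cast at htG hMle
      linarith
  -- semantic characterization of Z on good fibers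
  have keyZ : ∀ p : ℝ × Y, (Continuous fun t => F (t, p.2)) →
      (volume : Measure ℝ) {t | (t, p.2) ∈ N} = 0 → (Zc p ↔ F (p.1, p.2) = 0) := by
    intro p hcy hNy
    constructor
    · intro hz
      by_contra hF0
      have hε : 0 < |F (p.1, p.2)| := abs_pos.2 hF0
      obtain ⟨δ, hδ, hballs⟩ := Metric.continuousAt_iff.1 (hcy.continuousAt (x := p.1))
        _ (half_pos hε)
      have hbig : ∀ s : ℝ, |s - p.1| < δ → |F (p.1, p.2)|/2 < |F (s, p.2)| := by
        intro s hsd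
        have := hballs (show dist s p.1 < δ by rwa [Real.dist_eq])
        rw [Real.dist_eq] at this
        have habs := abs_sub_abs_le_abs_sub (F (p.1, p.2)) (F (s, p.2))
        rw [abs_sub_comm] at habs
        linarith
      obtain ⟨n, hn⟩ := exists_nat_one_div_lt hδ
      set M := ⌈2/|F (p.1, p.2)|⌉₊ with hMdef
      have hMle : 1/((M:ℝ)+1) < |F (p.1, p.2)|/2 := by
        have h1 : (2:ℝ)/|F (p.1, p.2)| ≤ M := Nat.le_ceil _
        have h2 : (0:ℝ) < (M:ℝ)+1 := by positivity
        rw [div_lt_iff₀ h2]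
        rw [div_le_iff₀ hε] at h1
        nlinarith
      have hz' := hz n M
      have hsub : {s : ℝ | s ∈ Set.Ioo (p.1 - 1/(n+1)) (p.1 + 1/(n+1)) ∧
          |G (s, p.2)| < 1/(M+1)} ⊆ {t | (t, p.2) ∈ N} := by
        rintro s ⟨hsI, hsG⟩
        have hsd : |s - p.1| < δ := by
          rw [abs_lt]
          rcases hsI with ⟨h1, h2⟩
          constructor <;> [linarith; linarith]
        have := hbig s hsd
        refine hNmem _ ?_
        intro heq
        rw [heq] at this
        push_cast at hsG
        linarith
      rw [measure_mono_null hsub hNy] at hz'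
      exact lt_irrefl _ hz'
    · intro hF0 n M
      have hM1 : (0:ℝ) < 1/((M:ℝ)+1) := by positivity
      obtain ⟨δ, hδ, hballs⟩ := Metric.continuousAt_iff.1 (hcy.continuousAt (x := p.1)) _ hM1
      have hsmall : ∀ s : ℝ, |s - p.1| < δ → |F (s, p.2)| < 1/((M:ℝ)+1) := by
        intro s hsd
        have := hballs (show dist s p.1 < δ by rwa [Real.dist_eq])
        rwa [Real.dist_eq, hF0, sub_zero] at this
      set δ' := min δ (1/((n:ℝ)+1)) with hδ'def
      have hδ' : 0 < δ' := lt_min hδ (by positivity)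
      have hsub : Set.Ioo (p.1 - δ') (p.1 + δ')
          ⊆ {s : ℝ | s ∈ Set.Ioo (p.1 - 1/(n+1)) (p.1 + 1/(n+1)) ∧
            |G (s, p.2)| < 1/(M+1)} ∪ {t | (t, p.2) ∈ N} := by
        rintro s ⟨h1, h2⟩
        have hd1 : δ' ≤ δ := min_le_left _ _
        have hd2 : δ' ≤ 1/((n:ℝ)+1) := min_le_right _ _
        have hsd : |s - p.1| < δ := by
          rw [abs_lt]; constructor <;> [linarith; linarith]
        have hF := hsmall s hsd
        rcases lt_or_ge (|G (s, p.2)|) (1/((M:ℝ)+1)) with h | h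
        · refine Or.inl ⟨⟨by push_cast; linarith, by push_cast; linarith⟩, by push_cast; linarith⟩
        · refine Or.inr (hNmem _ ?_)
          intro heq
          rw [heq] at hF
          linarith
      by_contra h0
      push_neg at h0
      rw [le_zero_iff] at h0
      have := measure_mono_null hsub (measure_union_null h0 hNy)
      rw [Real.volume_Ioo, ENNReal.ofReal_eq_zero] at this
      linarith
  -- every good point of S lies in some T pq qq
  have hcover : ∀ p : ℝ × Y, (F p = 0 ∧ ∃ d : ℝ, d ≠ 0 ∧
      HasDerivAt (fun t => F (t, p.2)) d p.1) → (Continuous fun t => F (t, p.2)) →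
      (volume : Measure ℝ) {t | (t, p.2) ∈ N} = 0 → ∃ pq qq : ℚ, p ∈ T pq qq := by
    rintro ⟨t₁, y⟩ ⟨hF0, d, hd, hder⟩ hcy hNy
    rw [hasDerivAt_iff_tendsto_slope] at hder
    have hslope : ∀ᶠ s in nhdsWithin t₁ {t₁}ᶜ, slope (fun t => F (t, y)) t₁ s ≠ 0 :=
      hder.eventually_ne hd
    rw [eventually_nhdsWithin_iff, Metric.eventually_nhds_iff] at hslope
    obtain ⟨δ, hδ, hball⟩ := hslope
    have hFne : ∀ s : ℝ, s ≠ t₁ → |s - t₁| < δ → F (s, y) ≠ 0 := by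
      intro s hs hsd hF0'
      have h1 := hball (show dist s t₁ < δ by rwa [Real.dist_eq]) hs
      apply h1
      rw [slope_def_field]
      simp only [hF0', show F (t₁, y) = 0 from hF0]
      simp
    obtain ⟨pq, hpq1, hpq2⟩ := exists_rat_btwn (show t₁ - δ < t₁ by linarith)
    obtain ⟨qq, hqq1, hqq2⟩ := exists_rat_btwn (show t₁ < t₁ + δ by linarith)
    refine ⟨pq, qq, ⟨⟨hpq2, hqq1⟩, ?_, ?_⟩⟩
    · exact (keyZ (t₁, y) hcy hNy).2 hF0
    · intro a b ha hab hb htrig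
      rw [keyP y hcy hNy a b (by exact_mod_cast hab)]
      intro s hs hF0'
      have haR : (pq:ℝ) < (a:ℝ) := by exact_mod_cast ha
      have hbR : (b:ℝ) < (qq:ℝ) := by exact_mod_cast hb
      refine hFne s ?_ ?_ hF0'
      · rcases htrig with h | h
        · have : s < t₁ := lt_of_le_of_lt hs.2 h
          exact ne_of_lt this
        · have : t₁ < s := lt_of_lt_of_le h hs.1
          exact ne_of_gt this
      · rw [abs_lt]
        constructor
        · have : (pq:ℝ) < s := lt_of_lt_of_le haR hs.1
          linarith
        · have : s < (qq:ℝ) := lt_of_le_of_lt hs.2 hbR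
          linarith
  -- fibers of T over good points are subsingletons
  have hfiber : ∀ pq qq : ℚ, ∀ y : Y, (Continuous fun t => F (t, y)) →
      (volume : Measure ℝ) {t | (t, y) ∈ N} = 0 →
      Set.Subsingleton {t : ℝ | (t, y) ∈ T pq qq} := by
    intro pq qq y hcy hNy
    have key2 : ∀ t₁ t₂ : ℝ, (t₁, y) ∈ T pq qq → (t₂, y) ∈ T pq qq → t₁ < t₂ → False := by
      intro t₁ t₂ h₁ h₂ hlt
      obtain ⟨hI₁, hZ₁, hP₁⟩ := h₁
      obtain ⟨hI₂, hZ₂, hP₂⟩ := h₂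
      have hF₂ : F (t₂, y) = 0 := (keyZ (t₂, y) hcy hNy).1 hZ₂
      obtain ⟨a, ha1, ha2⟩ := exists_rat_btwn hlt
      obtain ⟨b, hb1, hb2⟩ := exists_rat_btwn (show t₂ < (qq:ℝ) from hI₂.2)
      have hpa : pq < a := by
        have : (pq:ℝ) < (a:ℝ) := lt_trans hI₁.1 ha1
        exact_mod_cast this
      have hab : a < b := by
        have : (a:ℝ) < (b:ℝ) := lt_trans ha2 hb1
        exact_mod_cast this
      have hbq : b < qq := by exact_mod_cast hb2
      have hPab := hP₁ a b hpa hab hbq (Or.inr ha1)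
      rw [keyP y hcy hNy a b (by exact_mod_cast hab)] at hPab
      exact hPab t₂ ⟨le_of_lt ha2, le_of_lt hb1⟩ hF₂
    intro t₁ h₁ t₂ h₂
    by_contra hne
    rcases lt_or_gt_of_ne hne with h | h
    · exact key2 t₁ t₂ h₁ h₂ h
    · exact key2 t₂ t₁ h₂ h₁ h
  -- assemble
  set Q : Set Y := toMeasurable ν {y : Y | ¬ ((Continuous fun t => F (t, y)) ∧
    (volume : Measure ℝ) {t | (t, y) ∈ N} = 0)} with hQdef
  have hQ0 : ν Q = 0 := by
    rw [hQdef, measure_toMeasurable]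
    exact ae_iff.1 hGood
  have hsub : {p : ℝ × Y | F p = 0 ∧ ∃ d : ℝ, d ≠ 0 ∧
      HasDerivAt (fun t => F (t, p.2)) d p.1}
      ⊆ (Set.univ ×ˢ Q) ∪ ⋃ pq : ℚ, ⋃ qq : ℚ, T pq qq := by
    intro p hp
    by_cases hg : (Continuous fun t => F (t, p.2)) ∧
        (volume : Measure ℝ) {t | (t, p.2) ∈ N} = 0
    · obtain ⟨pq, qq, hmem⟩ := hcover p hp hg.1 hg.2
      exact Or.inr (Set.mem_iUnion.2 ⟨pq, Set.mem_iUnion.2 ⟨qq, hmem⟩⟩)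
    · exact Or.inl (Set.mem_prod.2 ⟨Set.mem_univ _, subset_toMeasurable _ _ hg⟩)
  refine measure_mono_null hsub (measure_union_null ?_ ?_)
  · rw [Measure.prod_prod, hQ0, mul_zero]
  · refine measure_iUnion_null fun pq => measure_iUnion_null fun qq => ?_
    have hswT : MeasurableSet (Prod.swap ⁻¹' (T pq qq) : Set (Y × ℝ)) :=
      (hTmeas pq qq).preimage measurable_swap
    have heq : ((volume : Measure ℝ).prod ν) (T pq qq)
        = (ν.prod (volume : Measure ℝ)) (Prod.swap ⁻¹' (T pq qq)) := by
      rw [← Measure.prod_swap, Measure.map_apply measurable_swap (hTmeas pq qq)]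
    rw [heq]
    rw [Measure.measure_prod_null hswT]
    filter_upwards [hGood] with y hy
    have hsec : (Prod.mk y ⁻¹' (Prod.swap ⁻¹' (T pq qq)) : Set ℝ)
        = {t : ℝ | (t, y) ∈ T pq qq} := rfl
    rw [hsec]
    exact Set.Subsingleton.measure_zero (hfiber pq qq y hy.1 hy.2) _


/-- If `f` is absolutely continuous in `k` dimensions then, for each coordinate
direction `i`, the set where `f` vanishes while the `i`-th partial derivative exists
and does not vanish is a `λ^k`-null set. -/
theorem measure_zero_of_eq_zero_of_pderiv_ne_zero (k : ℕ) (hk : 1 ≤ k)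
    (f : Euc k → ℝ) (hf : ACk k f) (i : Fin k) :
    volume {x : Euc k | f x = 0 ∧ ∃ d : ℝ, d ≠ 0 ∧
      HasDerivAt (fun t => f (WithLp.toLp 2 (Function.update x i t))) d (x i)} = 0 := by
  obtain ⟨m, rfl⟩ : ∃ m, k = m + 1 := ⟨k - 1, (Nat.succ_pred_eq_of_pos hk).symm⟩
  set eE := (MeasurableEquiv.toLp 2 (Fin (m+1) → ℝ)).symm with heEdef
  have hmpE : MeasurePreserving eE volume volume :=
    EuclideanSpace.volume_preserving_symm_measurableEquiv_toLp (Fin (m+1))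
  set f' : (Fin (m+1) → ℝ) → ℝ := fun z => f (eE.symm z) with hf'def
  have haeE : ∀ (p : (Fin (m+1) → ℝ) → Prop),
      (∀ᵐ x : Euc (m+1) ∂volume, p (eE x)) →
      ∀ᵐ z ∂(volume : Measure (Fin (m+1) → ℝ)), p z := by
    intro p hp
    rw [ae_iff] at hp ⊢
    rw [← hmpE.map_eq, eE.map_apply]
    exact hp
  have hsec' : ∀ j : Fin (m+1), ∀ᵐ z ∂(volume : Measure (Fin (m+1) → ℝ)),
      Continuous fun t => f' (Function.update z j t) := by
    intro j
    apply haeE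
    filter_upwards [hf j] with x hx
    have hcx : Continuous fun t => f (WithLp.toLp 2 (Function.update x j t)) := hx.continuous
    have hfun : (fun t => f' (Function.update (eE x) j t))
        = fun t => f (WithLp.toLp 2 (Function.update x j t)) := by
      funext t; rfl
    rw [hfun]
    exact hcx
  have hmeasf' : AEMeasurable f' (volume : Measure (Fin (m+1) → ℝ)) :=
    aemeasurable_of_ae_cont_sections (m+1) f' hsec'
  set e := MeasurableEquiv.piFinSuccAbove (fun _ : Fin (m+1) => ℝ) i with hedef
  set F : ℝ × (Fin m → ℝ) → ℝ :=
    fun p => f' (Fin.insertNth (α := fun _ => ℝ) i p.1 p.2) with hFdef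
  have hFe : AEMeasurable F ((volume : Measure ℝ).prod (volume : Measure (Fin m → ℝ))) := by
    have h1 : MeasurePreserving e.symm
        ((volume : Measure ℝ).prod (volume : Measure (Fin m → ℝ)))
        (volume : Measure (Fin (m+1) → ℝ)) := (hmp_i m i).symm e
    exact hmeasf'.comp_quasiMeasurePreserving h1.quasiMeasurePreserving
  have hcontF : ∀ᵐ y ∂(volume : Measure (Fin m → ℝ)), Continuous fun t => F (t, y) := by
    have h1 := ae_insert_of_ae m i _ (hsec' i)
    haveI : (ae (volume : Measure ℝ)).NeBot := ae_neBot.2 volume_real_ne_zero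
    obtain ⟨t₀, ht₀⟩ := h1.exists
    filter_upwards [ht₀] with y hy
    have hfun : (fun t => F (t, y))
        = fun t => f' (Function.update (Fin.insertNth (α := fun _ => ℝ) i t₀ y) i t) := by
      funext t; rw [update_insertNth]
    rw [hfun]
    exact hy
  have hkey := prod_key (volume : Measure (Fin m → ℝ)) F hFe hcontF
  have h₁ : ∀ z : Fin (m+1) → ℝ, F (e z) = f' z := by
    intro z
    show f' (Fin.insertNth (α := fun _ => ℝ) i (z i) (fun j => z (i.succAbove j))) = f' z
    rw [insertNth_eq_update, Function.update_eq_self]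
  have h₂ : ∀ z : Fin (m+1) → ℝ,
      (fun t => F (t, (e z).2)) = fun t => f' (Function.update z i t) := by
    intro z
    funext t
    show f' (Fin.insertNth (α := fun _ => ℝ) i t (fun j => z (i.succAbove j))) = _
    rw [insertNth_eq_update]
  have hS1 : {x : Euc (m+1) | f x = 0 ∧ ∃ d : ℝ, d ≠ 0 ∧
      HasDerivAt (fun t => f (WithLp.toLp 2 (Function.update x i t))) d (x i)}
      = eE ⁻¹' (e ⁻¹' {p : ℝ × (Fin m → ℝ) | F p = 0 ∧ ∃ d : ℝ, d ≠ 0 ∧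
        HasDerivAt (fun t => F (t, p.2)) d p.1}) := by
    ext x
    simp only [Set.mem_preimage, Set.mem_setOf_eq]
    have e1 : F (e (eE x)) = f x := by
      rw [h₁ (eE x)]; rfl
    have e2 : (fun t => F (t, (e (eE x)).2)) = fun t => f (WithLp.toLp 2 (Function.update x i t)) := by
      rw [h₂ (eE x)]; rfl
    have e3 : (e (eE x)).1 = x i := rfl
    rw [e1, e2, e3]
  rw [hS1, ← eE.map_apply, hmpE.map_eq, ← e.map_apply, (hmp_i m i).map_eq]
  exact hkey
end
end

section
/- Let k ≥ 1 and let f : ℝ^k → ℝ be locally integrable with respect to λ^k and absolutely continuous in k dimensions. For each i, extend the classical partial derivative ∂_{x_i} f by the value 0 on those lines where the sectional absolute continuity fails, and assume each so-extended ∂_{x_i} f is locally integrable. Then for every i and every φ ∈ C_c^∞(ℝ^k), ∫ f ∂_{x_i}φ dλ^k = −∫ (∂_{x_i} f) φ dλ^k; that is, the extended classical gradient is a weak gradient of f. -/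
open MeasureTheory Filter Topology
open scoped ENNReal NNReal

noncomputable section

namespace WeakGradAux

open Set intervalIntegral IsUnifLocDoublingMeasure

lemma locInt_intervalIntegrable {w : ℝ → ℝ} (hw : LocallyIntegrable w volume) (a b : ℝ) :
    IntervalIntegrable w volume a b := by
  rw [intervalIntegrable_iff]
  exact (hw.integrableOn_isCompact isCompact_uIcc).mono_set Set.uIoc_subset_uIcc

lemma ae_hasDerivAt_primitive {w : ℝ → ℝ} (hw : LocallyIntegrable w volume) :
    ∀ᵐ x : ℝ, HasDerivAt (fun y => ∫ t in (0:ℝ)..y, w t) (w x) x := by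
  filter_upwards [(vitaliFamily (volume : Measure ℝ) 1).ae_tendsto_average_norm_sub hw] with x hx
  set F : ℝ → ℝ := fun y => ∫ t in (0:ℝ)..y, w t with hF
  set B : ℝ → ℝ := fun y => ⨍ t in Icc (min x y) (max x y), ‖w t - w x‖ with hB
  have key : ∀ y : ℝ, y ≠ x → ‖slope F x y - w x‖ ≤ B y := by
    intro y hy
    have hyx : y - x ≠ 0 := sub_ne_zero.2 hy
    have hFy : F y - F x = ∫ t in x..y, w t := by
      show (∫ t in (0:ℝ)..y, w t) - (∫ t in (0:ℝ)..x, w t) = _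
      exact (intervalIntegral.integral_interval_sub_left (locInt_intervalIntegrable hw 0 y)
        (locInt_intervalIntegrable hw 0 x))
    have hslope : slope F x y - w x = (∫ t in x..y, (w t - w x)) / (y - x) := by
      rw [intervalIntegral.integral_sub (locInt_intervalIntegrable hw x y)
        intervalIntegrable_const, intervalIntegral.integral_const, ← hFy, slope_def_field,
        smul_eq_mul]
      field_simp
    have havg : B y = (∫ t in Icc (min x y) (max x y), ‖w t - w x‖) / |y - x| := by
      rw [hB]
      simp only
      rw [setAverage_eq, Real.volume_real_Icc_of_le (min_le_max : min x y ≤ max x y),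
        smul_eq_mul, max_sub_min_eq_abs, abs_sub_comm, div_eq_inv_mul]
    rw [hslope, havg, norm_div, Real.norm_eq_abs (y - x)]
    gcongr
    calc ‖∫ t in x..y, (w t - w x)‖ ≤ ∫ t in Set.uIoc x y, ‖w t - w x‖ :=
          intervalIntegral.norm_integral_le_integral_norm_uIoc
      _ = ∫ t in Icc (min x y) (max x y), ‖w t - w x‖ := by
          rw [show Set.uIoc x y = Ioc (min x y) (max x y) from rfl, ← MeasureTheory.integral_Icc_eq_integral_Ioc]
  have hBlim : Tendsto B (𝓝[≠] x) (𝓝 0) := by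
    rw [← nhdsLT_sup_nhdsGT, tendsto_sup]
    constructor
    · apply Tendsto.congr' _ (hx.comp (Real.tendsto_Icc_vitaliFamily_left x))
      filter_upwards [self_mem_nhdsWithin] with y (hy : y < x)
      rw [hB]; simp only [Function.comp]
      rw [min_eq_right hy.le, max_eq_left hy.le]
    · apply Tendsto.congr' _ (hx.comp (Real.tendsto_Icc_vitaliFamily_right x))
      filter_upwards [self_mem_nhdsWithin] with y (hy : x < y)
      rw [hB]; simp only [Function.comp]
      rw [min_eq_left hy.le, max_eq_right hy.le]
  rw [hasDerivAt_iff_tendsto_slope]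
  rw [← tendsto_sub_nhds_zero_iff]
  apply squeeze_zero_norm' _ hBlim
  filter_upwards [self_mem_nhdsWithin] with y (hy : y ≠ x) using key y hy

lemma parts1d {u w g φ : ℝ → ℝ} (hw : LocallyIntegrable w volume)
    (hu : ∀ x, u x = u 0 + ∫ t in (0:ℝ)..x, w t)
    (hgd : ∀ᵐ t : ℝ, HasDerivAt u (g t) t)
    (hφ : ContDiff ℝ (⊤ : ℕ∞) φ) (hφc : HasCompactSupport φ) :
    ∫ x, u x * deriv φ x = - ∫ x, g x * φ x := by
  -- `g = w` almost everywhere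
  have hu' : u = fun y => u 0 + ∫ t in (0:ℝ)..y, w t := funext hu
  have hgw : ∀ᵐ t : ℝ, g t = w t := by
    filter_upwards [hgd, ae_hasDerivAt_primitive hw] with t h1 h2
    have h1' : HasDerivAt (fun y => u 0 + ∫ s in (0:ℝ)..y, w s) (g t) t := hu' ▸ h1
    exact h1'.unique (h2.const_add (u 0))
  have hRHS : ∫ x, g x * φ x = ∫ x, w x * φ x :=
    integral_congr_ae (hgw.mono fun x hx => by simp only [hx])
  -- basic facts about `φ`
  have hφcont : Continuous φ := hφ.continuous
  have hφ' : Continuous (deriv φ) := (hφ.continuous_deriv (by simp))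
  have hφ'c : HasCompactSupport (deriv φ) := hφc.deriv
  obtain ⟨R, hR⟩ := hφc.isBounded.subset_closedBall 0
  set a : ℝ := -R - 1 with ha
  have hsupp : ∀ x : ℝ, x ≤ a → x ∉ tsupport φ := by
    intro x hx hmem
    have := hR hmem
    rw [Real.closedBall_eq_Icc, zero_sub, zero_add] at this
    have : -R ≤ x := this.1
    have hR0 : (0:ℝ) ≤ R := by
      by_contra h
      push_neg at h
      linarith
    linarith
  have hφ0 : ∀ x : ℝ, x ≤ a → φ x = 0 := fun x hx =>
    image_eq_zero_of_notMem_tsupport (hsupp x hx)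
  have hφ'0 : ∀ x : ℝ, x ≤ a → deriv φ x = 0 := by
    intro x hx
    by_contra hne
    exact hsupp x hx (support_deriv_subset (Function.mem_support.2 hne))
  have hφ'0R : ∀ x : ℝ, R < x → deriv φ x = 0 := by
    intro x hx
    by_contra hne
    have := hR (support_deriv_subset (Function.mem_support.2 hne))
    rw [Real.closedBall_eq_Icc, zero_sub, zero_add] at this
    linarith [this.2]
  have hφtop : Tendsto φ atTop (𝓝 0) := by
    apply Tendsto.congr' _ tendsto_const_nhds
    filter_upwards [eventually_ge_atTop (R+1)] with x hx
    refine (image_eq_zero_of_notMem_tsupport fun hmem => ?_).symm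
    have := hR hmem
    rw [Real.closedBall_eq_Icc, zero_sub, zero_add] at this
    linarith [this.2]
  -- ∫_{Ici t} φ' = -φ t
  have hIci : ∀ t : ℝ, ∫ x in Ici t, deriv φ x = -φ t := by
    intro t
    rw [MeasureTheory.integral_Ici_eq_integral_Ioi]
    rw [integral_Ioi_of_hasDerivAt_of_tendsto' (f := φ)
      (fun x _ => hφ.differentiable (by simp) |>.differentiableAt.hasDerivAt)
      ((hφ'.integrable_of_hasCompactSupport hφ'c).integrableOn) hφtop]
    ring
  have hint0 : ∫ x, deriv φ x = 0 := by
    rw [← setIntegral_eq_integral_of_forall_compl_eq_zero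
      (s := Ici a) (fun x hx => hφ'0 x (le_of_not_gt (fun h => hx h.le)))]
    rw [hIci, hφ0 a le_rfl, neg_zero]
  -- rewrite `u x` with basepoint `a`
  have hua : ∀ x : ℝ, u x = u a + ∫ t in a..x, w t := by
    intro x
    have : (∫ t in (0:ℝ)..x, w t) - (∫ t in (0:ℝ)..a, w t) = ∫ t in a..x, w t :=
      intervalIntegral.integral_interval_sub_left (locInt_intervalIntegrable hw 0 x)
        (locInt_intervalIntegrable hw 0 a)
    rw [hu x, hu a]; linarith
  -- Fubini setup
  set G : ℝ → ℝ → ℝ := fun x t => (Ioc a x).indicator (fun s => deriv φ x * w s) t with hG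
  have hGeq : Function.uncurry G =
      {p : ℝ × ℝ | a < p.2 ∧ p.2 ≤ p.1}.indicator
        (fun p => deriv φ p.1 * (Icc a R).indicator w p.2) := by
    funext p
    rcases p with ⟨x, t⟩
    simp only [Function.uncurry, hG, Set.indicator, Set.mem_Ioc, Set.mem_setOf_eq, Set.mem_Icc]
    by_cases h1 : a < t ∧ t ≤ x
    · simp only [h1, if_true]
      by_cases h2 : t ≤ R
      · simp [h1.1.le, h2]
      · have hd : deriv φ x = 0 := hφ'0R x (by push_neg at h2; linarith [h1.2])
        simp [hd, h2]
    · simp [h1]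
  have hsmeas : MeasurableSet {p : ℝ × ℝ | a < p.2 ∧ p.2 ≤ p.1} := by
    rw [Set.setOf_and]
    exact (measurableSet_lt measurable_const measurable_snd).inter
      (measurableSet_le measurable_snd measurable_fst)
  have hwind : Integrable ((Icc a R).indicator w) volume :=
    (hw.integrableOn_isCompact isCompact_Icc).integrable_indicator measurableSet_Icc
  have hHint : Integrable (fun p : ℝ × ℝ => deriv φ p.1 * (Icc a R).indicator w p.2)
      (volume.prod volume) :=
    Integrable.mul_prod (hφ'.integrable_of_hasCompactSupport hφ'c) hwind
  have hGint : Integrable (Function.uncurry G) (volume.prod volume) := by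
    rw [hGeq]; exact hHint.indicator hsmeas
  have hinner1 : ∀ x : ℝ, (∫ t in a..x, w t) * deriv φ x = ∫ t, G x t := by
    intro x
    by_cases hx : a ≤ x
    · rw [hG]
      simp only
      rw [MeasureTheory.integral_indicator measurableSet_Ioc,
        intervalIntegral.integral_of_le hx, MeasureTheory.integral_const_mul]
      ring
    · push_neg at hx
      rw [hφ'0 x hx.le, mul_zero, hG]
      simp only
      rw [Set.Ioc_eq_empty (by intro h; exact absurd hx (not_lt.2 h.le))]
      simp
  have hinner2 : ∀ t : ℝ, (∫ x, G x t) = -(w t * φ t) := by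
    intro t
    by_cases ht : a < t
    · have heq : (fun x => G x t) = (Ici t).indicator (fun x => deriv φ x * w t) := by
        funext x
        rw [hG]
        simp only [Set.indicator, Set.mem_Ioc, Set.mem_Ici]
        by_cases hxt : t ≤ x
        · simp [hxt, ht]
        · simp [hxt, ht]
      rw [heq, MeasureTheory.integral_indicator measurableSet_Ici, MeasureTheory.integral_mul_const, hIci t]
      ring
    · push_neg at ht
      have heq : (fun x => G x t) = fun _ => (0:ℝ) := by
        funext x
        rw [hG]
        exact Set.indicator_of_notMem (fun hmem => absurd hmem.1 (not_lt.2 ht)) _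
      rw [heq, MeasureTheory.integral_zero, hφ0 t ht, mul_zero, neg_zero]
  have i1 : Integrable (fun x : ℝ => u a * deriv φ x) volume :=
    ((hφ'.integrable_of_hasCompactSupport hφ'c).const_mul _)
  have i2 : Integrable (fun x : ℝ => (∫ t in a..x, w t) * deriv φ x) volume := by
    apply Continuous.integrable_of_hasCompactSupport
    · exact (intervalIntegral.continuous_primitive
        (fun c b => locInt_intervalIntegrable hw c b) a).mul hφ'
    · exact hφ'c.mul_left
  calc ∫ x, u x * deriv φ x
      = ∫ x, (u a * deriv φ x + (∫ t in a..x, w t) * deriv φ x) :=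
        integral_congr_ae (Filter.Eventually.of_forall fun x => by simp only []; rw [hua x]; ring)
    _ = (∫ x, u a * deriv φ x) + ∫ x, (∫ t in a..x, w t) * deriv φ x := integral_add i1 i2
    _ = ∫ x, (∫ t in a..x, w t) * deriv φ x := by
        rw [MeasureTheory.integral_const_mul, hint0, mul_zero, zero_add]
    _ = ∫ x, ∫ t, G x t := integral_congr_ae (Filter.Eventually.of_forall fun x => hinner1 x)
    _ = ∫ t, ∫ x, G x t := integral_integral_swap hGint
    _ = ∫ t, -(w t * φ t) := integral_congr_ae (Filter.Eventually.of_forall fun t => hinner2 t)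
    _ = - ∫ t, w t * φ t := integral_neg _
    _ = - ∫ x, g x * φ x := by rw [hRHS]

variable {m : ℕ} (i : Fin (m+1))

def Emap (m : ℕ) (i : Fin (m+1)) : Euc (m+1) ≃ᵐ (ℝ × (Fin m → ℝ)) :=
  (MeasurableEquiv.toLp 2 (Fin (m+1) → ℝ)).symm.trans
    (MeasurableEquiv.piFinSuccAbove (fun _ : Fin (m+1) => ℝ) i)

lemma Emap_preserving : MeasurePreserving (Emap m i) volume volume :=
  (volume_preserving_piFinSuccAbove (fun _ : Fin (m+1) => ℝ) i).comp
    (EuclideanSpace.volume_preserving_symm_measurableEquiv_toLp (Fin (m+1)))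

lemma Emap_apply (x : Euc (m+1)) : Emap m i x = (x i, fun j => x (i.succAbove j)) := rfl

def pt (i : Fin (m+1)) (t : ℝ) (y : Fin m → ℝ) : Euc (m+1) := WithLp.toLp 2 (i.insertNth t y)

lemma Emap_symm_apply (t : ℝ) (y : Fin m → ℝ) :
    (Emap m i).symm (t, y) = pt i t y := by
  have h : Emap m i (pt i t y) = (t, y) := by
    rw [Emap_apply]
    refine Prod.ext ?_ ?_
    · simp [pt]
    · funext j
      simp [pt]
  rw [← h, MeasurableEquiv.symm_apply_apply]

lemma pt_apply_self (t : ℝ) (y : Fin m → ℝ) : pt i t y i = t := by simp [pt]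

lemma pt_update (t s : ℝ) (y : Fin m → ℝ) :
    WithLp.toLp 2 (Function.update (pt i t y) i s) = pt i s y := by
  simpa [pt] using congrArg (WithLp.toLp 2) (Fin.update_insertNth i t s y)

lemma pt_eq_add (t : ℝ) (y : Fin m → ℝ) :
    pt i t y = pt i 0 y + t • EuclideanSpace.single i (1:ℝ) := by
  ext j
  by_cases h : j = i
  · subst h
    simp [pt, EuclideanSpace.single_apply, PiLp.add_apply, PiLp.smul_apply]
  · obtain ⟨l, rfl⟩ := Fin.exists_succAbove_eq h
    simp [pt, EuclideanSpace.single_apply, PiLp.add_apply, PiLp.smul_apply,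
      Fin.succAbove_ne i l]



lemma abs_coord_le_norm (x : Euc (m+1)) (j : Fin (m+1)) : |x j| ≤ ‖x‖ := by
  rw [EuclideanSpace.norm_eq]
  have h1 : |x j| = Real.sqrt (|x j| ^ 2) := by
    rw [Real.sqrt_sq_eq_abs, abs_abs]
  rw [h1]
  apply Real.sqrt_le_sqrt
  have : ‖x j‖ ^ 2 = |x j| ^ 2 := by rw [Real.norm_eq_abs]
  rw [← this]
  exact Finset.single_le_sum (f := fun l => ‖x l‖ ^ 2) (fun l _ => by positivity)
    (Finset.mem_univ j)

lemma ae_swap {Q : (ℝ × (Fin m → ℝ)) → Prop}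
    (h : ∀ᵐ p : ℝ × (Fin m → ℝ) ∂volume, Q p) :
    ∀ᵐ y : Fin m → ℝ ∂volume, ∀ᵐ t : ℝ ∂volume, Q (t, y) := by
  rw [Measure.volume_eq_prod] at h
  have h2 : ∀ᵐ p ∂((volume : Measure (Fin m → ℝ)).prod (volume : Measure ℝ)), Q p.swap :=
    Measure.measurePreserving_swap.quasiMeasurePreserving.ae h
  exact Measure.ae_ae_of_ae_prod h2

lemma ae_transfer {P : Euc (m+1) → Prop} (h : ∀ᵐ x : Euc (m+1) ∂volume, P x) :
    ∀ᵐ y : Fin m → ℝ ∂volume, ∀ᵐ t : ℝ ∂volume, P (pt i t y) := by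
  have h1 : ∀ᵐ p : ℝ × (Fin m → ℝ) ∂volume, P ((Emap m i).symm p) :=
    (MeasurePreserving.symm (Emap m i) (Emap_preserving i)).quasiMeasurePreserving.ae h
  have h2 := ae_swap h1
  filter_upwards [h2] with y hy
  filter_upwards [hy] with t ht
  rwa [Emap_symm_apply] at ht

end WeakGradAux

open WeakGradAux in
/-- If `f` is locally integrable and absolutely continuous in `k` dimensions, and
`g i` coincides `λ^k`-a.e. with the classical `i`-th partial derivative of `f`
(extended arbitrarily, e.g. by `0`, on the null set of lines where sectional absolute
continuity fails) and each `g i` is locally integrable, then integration by parts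
holds against all test functions: the extended classical gradient is a weak gradient
of `f`. -/
theorem ACk_implies_weak_gradient (k : ℕ) (hk : 1 ≤ k) (f : Euc k → ℝ)
    (hf : LocallyIntegrable f volume) (hAC : ACk k f) (g : Fin k → Euc k → ℝ)
    (hg : ∀ i : Fin k, ∀ᵐ x : Euc k ∂volume,
      HasDerivAt (fun t => f (WithLp.toLp 2 (Function.update x i t))) (g i x) (x i))
    (hgint : ∀ i, LocallyIntegrable (g i) volume) :
    ∀ i : Fin k, ∀ φ : Euc k → ℝ, ContDiff ℝ (⊤ : ℕ∞) φ → HasCompactSupport φ →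
      ∫ x, f x * fderiv ℝ φ x (EuclideanSpace.single i 1) ∂volume
        = - ∫ x, g i x * φ x ∂volume := by
  obtain ⟨m, rfl⟩ : ∃ m, k = m + 1 := ⟨k - 1, (Nat.succ_pred_eq_of_pos hk).symm⟩
  intro i φ hφ hφc
  set v : Euc (m+1) := EuclideanSpace.single i (1:ℝ) with hv
  set F₁ : Euc (m+1) → ℝ := fun x => f x * fderiv ℝ φ x v with hF₁
  set F₂ : Euc (m+1) → ℝ := fun x => g i x * φ x with hF₂
  have hE := MeasurePreserving.symm (Emap m i) (Emap_preserving i)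
  -- Integrability of both integrands
  have hc1 : Continuous fun x : Euc (m+1) => fderiv ℝ φ x v :=
    (hφ.continuous_fderiv (by simp)).clm_apply continuous_const
  have hc1s : HasCompactSupport fun x : Euc (m+1) => fderiv ℝ φ x v := by
    have := hφc.fderiv ℝ
    exact this.comp_left (g := fun L : Euc (m+1) →L[ℝ] ℝ => L v) rfl
  have hint1 : Integrable F₁ volume := by
    have := hf.integrable_smul_left_of_hasCompactSupport hc1 hc1s
    apply this.congr
    filter_upwards with x
    simp [hF₁, smul_eq_mul, mul_comm]
  have hint2 : Integrable F₂ volume := by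
    have := (hgint i).integrable_smul_left_of_hasCompactSupport hφ.continuous hφc
    apply this.congr
    filter_upwards with x
    simp [hF₂, smul_eq_mul, mul_comm]
  have hemb := (Emap m i).symm.measurableEmbedding
  have hint1' : Integrable (fun p : ℝ × (Fin m → ℝ) => F₁ ((Emap m i).symm p)) volume :=
    (hE.integrable_comp_emb hemb).2 hint1
  have hint2' : Integrable (fun p : ℝ × (Fin m → ℝ) => F₂ ((Emap m i).symm p)) volume :=
    (hE.integrable_comp_emb hemb).2 hint2
  -- expressing both integrals as iterated integrals
  have eqi : ∀ (F : Euc (m+1) → ℝ), Integrable F volume →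
      ∫ x, F x = ∫ y : Fin m → ℝ, ∫ t : ℝ, F (pt i t y) := by
    intro F hF
    have e1 : ∫ x, F x = ∫ p : ℝ × (Fin m → ℝ), F ((Emap m i).symm p) :=
      (hE.integral_comp hemb F).symm
    have hF' : Integrable (fun p : ℝ × (Fin m → ℝ) => F ((Emap m i).symm p)) volume :=
      (hE.integrable_comp_emb hemb).2 hF
    rw [e1]
    rw [Measure.volume_eq_prod] at hF' ⊢
    rw [integral_prod_symm _ hF']
    simp only [Emap_symm_apply]
  -- a.e. facts along lines
  haveI : (ae (volume : Measure ℝ)).NeBot := by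
    rw [ae_neBot]
    intro h0
    have := Real.volume_univ
    rw [h0] at this
    simp at this
  have hA' : ∀ᵐ y : Fin m → ℝ ∂volume, IsAC (fun s => f (pt i s y)) := by
    have h1 := ae_transfer i (hAC i)
    filter_upwards [h1] with y hy
    obtain ⟨t, ht⟩ := hy.exists
    have : (fun s => f (WithLp.toLp 2 (Function.update (pt i t y) i s))) = fun s => f (pt i s y) := by
      funext s
      rw [pt_update]
    rwa [this] at ht
  have hB' : ∀ᵐ y : Fin m → ℝ ∂volume,
      ∀ᵐ t : ℝ ∂volume, HasDerivAt (fun s => f (pt i s y)) (g i (pt i t y)) t := by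
    have h1 := ae_transfer i (hg i)
    filter_upwards [h1] with y hy
    filter_upwards [hy] with t ht
    have h2 : (fun s => f (WithLp.toLp 2 (Function.update (pt i t y) i s))) = fun s => f (pt i s y) := by
      funext s
      rw [pt_update]
    rw [h2, pt_apply_self] at ht
    exact ht
  -- smoothness and support of the sections of φ
  have hder : ∀ (y : Fin m → ℝ) (t : ℝ),
      HasDerivAt (fun s => φ (pt i s y)) (fderiv ℝ φ (pt i t y) v) t := by
    intro y t
    have hcurve : HasDerivAt (fun s : ℝ => pt i s y) v t := by
      have h0 : HasDerivAt (fun s : ℝ => pt i 0 y + s • v) v t := by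
        simpa using ((hasDerivAt_id t).smul_const v).const_add (pt i 0 y)
      have hfe : (fun s : ℝ => pt i s y) = fun s : ℝ => pt i 0 y + s • v :=
        funext fun s => pt_eq_add i s y
      rw [hfe]
      exact h0
    have hFd : HasFDerivAt φ (fderiv ℝ φ (pt i t y)) (pt i t y) :=
      (hφ.differentiable (by simp) (pt i t y)).hasFDerivAt
    exact hFd.comp_hasDerivAt t hcurve
  have hφy : ∀ y : Fin m → ℝ, ContDiff ℝ (⊤ : ℕ∞) (fun t => φ (pt i t y)) := by
    intro y
    have hfe : (fun s : ℝ => pt i s y) = fun s : ℝ => pt i 0 y + s • v :=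
      funext fun s => pt_eq_add i s y
    apply hφ.comp
    rw [hfe]
    exact contDiff_const.add (contDiff_id.smul contDiff_const)
  have hφyc : ∀ y : Fin m → ℝ, HasCompactSupport (fun t => φ (pt i t y)) := by
    intro y
    obtain ⟨M, hM⟩ := hφc.isBounded.subset_closedBall 0
    apply HasCompactSupport.intro (isCompact_Icc (a := -M) (b := M))
    intro t ht
    by_contra hne
    have hmem : pt i t y ∈ tsupport φ := subset_tsupport φ (Function.mem_support.2 hne)
    have h1 : ‖pt i t y‖ ≤ M := by
      have := hM hmem
      simpa [Metric.mem_closedBall, dist_zero_right] using this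
    have h2 : |t| ≤ M := by
      have := abs_coord_le_norm (pt i t y) i
      rw [pt_apply_self] at this
      linarith
    rw [Set.mem_Icc] at ht
    push_neg at ht
    rcases abs_le.1 h2 with ⟨hl, hr⟩
    rcases lt_or_ge t (-M) with h | h
    · linarith
    · linarith [ht h]
  -- the key line-by-line identity
  have key : ∀ᵐ y : Fin m → ℝ ∂volume,
      (∫ t : ℝ, F₁ (pt i t y)) = - ∫ t : ℝ, F₂ (pt i t y) := by
    filter_upwards [hA', hB'] with y hAy hBy
    obtain ⟨w, hwloc, hwrep⟩ := hAy
    have h1 := parts1d (u := fun s => f (pt i s y)) (w := w)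
      (g := fun t => g i (pt i t y)) (φ := fun t => φ (pt i t y))
      hwloc hwrep hBy (hφy y) (hφyc y)
    calc ∫ t : ℝ, F₁ (pt i t y)
        = ∫ t : ℝ, f (pt i t y) * deriv (fun s => φ (pt i s y)) t := by
          apply integral_congr_ae
          filter_upwards with t
          rw [(hder y t).deriv]
      _ = - ∫ t : ℝ, g i (pt i t y) * φ (pt i t y) := h1
      _ = - ∫ t : ℝ, F₂ (pt i t y) := rfl
  -- putting everything together
  rw [eqi F₁ hint1, eqi F₂ hint2]
  rw [integral_congr_ae key, integral_neg]
end
end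

section
/- Let F be a Borel probability measure on ℝ such that I(F) := sup{ (∫ φ′ dF)² / ∫ φ² dF : φ ∈ 𝒟₁ with ∫ φ² dF ≠ 0 } is finite. Then for every φ ∈ 𝒟₁ with φ = 0 F-almost everywhere, one has ∫ φ′ dF = 0. (Consequently, the linear functional φ ↦ ∫ φ′ dF respects F-equivalence classes and extends to a bounded linear functional on L₂(F) of norm at most √I(F).) -/
open MeasureTheory Filter Topology
open scoped ENNReal NNReal

noncomputable section

/-- The logistic compactification map `ℓ(x) = eˣ/(eˣ+1)`. -/
def ell (x : ℝ) : ℝ := Real.exp x / (Real.exp x + 1)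

/-- The test-function class `𝒟₁`: functions `φ = ψ ∘ ℓ` for some smooth `ψ : ℝ → ℝ`. -/
def MemD1 (φ : ℝ → ℝ) : Prop :=
  ∃ ψ : ℝ → ℝ, ContDiff ℝ (⊤ : ℕ∞) ψ ∧ φ = fun x => ψ (ell x)

/-- The supremal Fisher information of the one-dimensional location model. -/
def locFisher (F : Measure ℝ) : ℝ≥0∞ :=
  sSup {r : ℝ≥0∞ | ∃ φ : ℝ → ℝ, MemD1 φ ∧ (∫ x, (φ x) ^ 2 ∂F) ≠ 0 ∧
    r = ENNReal.ofReal ((∫ x, deriv φ x ∂F) ^ 2 / ∫ x, (φ x) ^ 2 ∂F)}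

/-- If the supremal Fisher information `I(F)` is finite, then the linear functional
`φ ↦ ∫ φ' dF` respects `F`-equivalence classes: `φ = 0` `F`-a.e. implies `∫ φ' dF = 0`. -/
theorem fisher_functional_well_defined (F : Measure ℝ) [IsProbabilityMeasure F]
    (hfin : locFisher F < ⊤) (φ : ℝ → ℝ) (hφ : MemD1 φ)
    (h0 : φ =ᵐ[F] (fun _ => (0 : ℝ))) :
    ∫ x, deriv φ x ∂F = 0 := by
  by_contra hc
  set c := ∫ x, deriv φ x ∂F with hcdef
  obtain ⟨ψ, hψ, hφψ⟩ := hφ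
  have key : ∀ t : ℝ, t ≠ 0 → ENNReal.ofReal (c ^ 2 / t ^ 2) ≤ locFisher F := by
    intro t ht
    apply le_sSup
    have hint2 : (∫ x, (φ x + t) ^ 2 ∂F) = t ^ 2 := by
      have hae : (fun x => (φ x + t) ^ 2) =ᵐ[F] fun _ => t ^ 2 :=
        h0.mono (by intro x hx; simp [hx])
      rw [integral_congr_ae hae, integral_const]
      simp
    refine ⟨fun x => φ x + t, ⟨fun y => ψ y + t, hψ.add contDiff_const, by
      funext x; simp [hφψ]⟩, ?_, ?_⟩
    · rw [hint2]; exact pow_ne_zero 2 ht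
    · have hder : (fun x => deriv (fun y => φ y + t) x) = fun x => deriv φ x := by
        funext x; exact deriv_add_const _
      rw [hint2]
      congr 2
      exact (integral_congr_ae (Filter.Eventually.of_forall fun x =>
        congrFun hder x)).symm ▸ rfl
  have hne : locFisher F ≠ ⊤ := hfin.ne
  set M := (locFisher F).toReal with hM
  have hMnn : 0 ≤ M := ENNReal.toReal_nonneg
  have hc2 : (0:ℝ) < c ^ 2 := by positivity
  set t : ℝ := |c| / Real.sqrt (M + 1) with htdef
  have hsq : (0:ℝ) < Real.sqrt (M + 1) := Real.sqrt_pos.mpr (by linarith)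
  have ht : t ≠ 0 := by
    have : (0:ℝ) < t := div_pos (abs_pos.mpr hc) hsq
    exact this.ne'
  have ht2 : t ^ 2 = c ^ 2 / (M + 1) := by
    rw [htdef, div_pow, sq_abs, Real.sq_sqrt (by linarith : (0:ℝ) ≤ M + 1)]
  have hratio : c ^ 2 / t ^ 2 = M + 1 := by
    rw [ht2]
    field_simp
  have := key t ht
  rw [hratio] at this
  have hle : M + 1 ≤ M := by
    have h2 := (ENNReal.ofReal_le_iff_le_toReal hne).mp this
    linarith
  linarith
end
end

section
/- Let X be a compact metric space, S a nonempty index set, and for each s ∈ S let h_s, g_s : X → ℝ be continuous. For a Borel probability measure μ on X define J(μ) := sup{ (∫ h_s dμ)² / ∫ g_s² dμ : s ∈ S with ∫ g_s² dμ ≠ 0 }, with J(μ) := 0 if no s is admissible (values in [0,∞]). Then: (1) J is lower semicontinuous with respect to weak convergence of probability measures on X, i.e. μ_n → μ weakly implies liminf_n J(μ_n) ≥ J(μ); (2) if in addition for every Borel probability measure μ on X and every s ∈ S the equality ∫ g_s² dμ = 0 implies ∫ h_s dμ = 0, then J is convex: J((1−t)μ₀ + tμ₁) ≤ (1−t)J(μ₀)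 + tJ(μ₁) for all Borel probability measures μ₀, μ₁ on X and all t ∈ [0,1]. -/
open MeasureTheory Filter Topology
open scoped ENNReal NNReal

/-!
Under the convention `x / 0 = 0`, `J μ` is the supremum over `s` of `φ (∫ h_s dμ, ∫ g_s² dμ)`
with `φ (a, b) = max (a² / b) 0`. The integrals of continuous functions are continuous in `μ` for
the weak topology, and `φ` is lower semicontinuous on `ℝ²` (it vanishes for `b ≤ 0` and is
continuous for `b > 0`), so `J` is a supremum of lower semicontinuous functions. The integrals
are also affine in `μ`, and `φ` is convex on `{b > 0} ∪ {(0, 0)}` by Sedrakyan's inequality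
`(a₀ + a₁)² / (b₀ + b₁) ≤ a₀² / b₀ + a₁² / b₁`; the hypothesis of the convexity part says exactly
that `(∫ h_s dμ, ∫ g_s² dμ)` stays in that domain.
-/

theorem add_sq_div_add_le {x₀ x₁ y₀ y₁ : ℝ} (hy₀ : 0 ≤ y₀) (hy₁ : 0 ≤ y₁)
    (hx₀ : y₀ = 0 → x₀ = 0) (hx₁ : y₁ = 0 → x₁ = 0) :
    (x₀ + x₁) ^ 2 / (y₀ + y₁) ≤ x₀ ^ 2 / y₀ + x₁ ^ 2 / y₁ := by
  rcases hy₀.eq_or_lt with rfl | hy₀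
  · simp [hx₀ rfl]
  rcases hy₁.eq_or_lt with rfl | hy₁
  · simp [hx₁ rfl]
  simpa [Fin.sum_univ_two] using
    Finset.sq_sum_div_le_sum_sq_div Finset.univ ![x₀, x₁] (g := ![y₀, y₁])
      (by simp [Fin.forall_fin_two, hy₀, hy₁])

theorem mul_sq_div_mul {c x y : ℝ} (hc : 0 ≤ c) :
    (c * x) ^ 2 / (c * y) = c * (x ^ 2 / y) := by
  rcases hc.eq_or_lt with rfl | hc
  · simp
  field_simp

theorem sq_div_convex_comb_le {a b x₀ x₁ y₀ y₁ : ℝ} (ha : 0 ≤ a) (hb : 0 ≤ b)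
    (hy₀ : 0 ≤ y₀) (hy₁ : 0 ≤ y₁) (hx₀ : y₀ = 0 → x₀ = 0) (hx₁ : y₁ = 0 → x₁ = 0) :
    (a * x₀ + b * x₁) ^ 2 / (a * y₀ + b * y₁) ≤ a * (x₀ ^ 2 / y₀) + b * (x₁ ^ 2 / y₁) := by
  rw [← mul_sq_div_mul ha, ← mul_sq_div_mul hb]
  refine add_sq_div_add_le (mul_nonneg ha hy₀) (mul_nonneg hb hy₁) ?_ ?_ <;>
  · intro h
    rcases mul_eq_zero.1 h with h | h <;> simp [h, hx₀, hx₁]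

theorem lowerSemicontinuous_ofReal_sq_div :
    LowerSemicontinuous fun p : ℝ × ℝ => ENNReal.ofReal (p.1 ^ 2 / p.2) := by
  intro p r hr
  rcases le_or_gt p.2 0 with hp | hp
  · have : p.1 ^ 2 / p.2 ≤ 0 := div_nonpos_of_nonneg_of_nonpos (sq_nonneg _) hp
    simp [ENNReal.ofReal_of_nonpos this] at hr
  have hcont : ContinuousAt (fun p : ℝ × ℝ => ENNReal.ofReal (p.1 ^ 2 / p.2)) p :=
    ENNReal.continuous_ofReal.continuousAt.comp
      ((continuous_fst.pow 2).continuousAt.div continuous_snd.continuousAt hp.ne')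
  exact hcont.eventually (lt_mem_nhds hr)

theorem integral_smul_add_smul_measure {X : Type*} [MeasurableSpace X] {μ₀ μ₁ : Measure X}
    {f : X → ℝ} (h₀ : Integrable f μ₀) (h₁ : Integrable f μ₁) (a b : ℝ≥0) :
    ∫ x, f x ∂(a • μ₀ + b • μ₁) = a * ∫ x, f x ∂μ₀ + b * ∫ x, f x ∂μ₁ := by
  rw [integral_add_measure (h₀.smul_measure_nnreal) (h₁.smul_measure_nnreal),
    integral_smul_nnreal_measure, integral_smul_nnreal_measure, NNReal.smul_def, NNReal.smul_def,
    smul_eq_mul, smul_eq_mul]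

section SqIntegralRatio

variable {X : Type*} [MeasurableSpace X]

/-- `(∫ u dμ)² / ∫ v² dμ`. Since `x / 0 = 0` it vanishes when `∫ v² dμ = 0`, so a supremum of
such ratios need not exclude the inadmissible indices. -/
noncomputable def sqIntegralRatio (u v : X → ℝ) (μ : Measure X) : ℝ≥0∞ :=
  ENNReal.ofReal ((∫ x, u x ∂μ) ^ 2 / ∫ x, v x ^ 2 ∂μ)

theorem sSup_sqIntegralRatio_eq_iSup {S : Type*} (u v : S → X → ℝ) (μ : Measure X) :
    sSup {r : ℝ≥0∞ | ∃ s : S, (∫ x, (v s x) ^ 2 ∂μ) ≠ 0 ∧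
        r = ENNReal.ofReal ((∫ x, u s x ∂μ) ^ 2 / ∫ x, (v s x) ^ 2 ∂μ)} =
      ⨆ s, sqIntegralRatio (u s) (v s) μ := by
  refine le_antisymm (sSup_le ?_) (iSup_le fun s => ?_)
  · rintro r ⟨s, -, rfl⟩
    exact le_iSup (fun s => sqIntegralRatio (u s) (v s) μ) s
  · by_cases hv : ∫ x, (v s x) ^ 2 ∂μ = 0
    · simp [sqIntegralRatio, hv]
    · exact le_sSup ⟨s, hv, rfl⟩

variable [TopologicalSpace X] [CompactSpace X] [OpensMeasurableSpace X] {u v : X → ℝ}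

theorem Continuous.integrable_of_compactSpace {f : X → ℝ}
    (hf : Continuous f) (μ : Measure X) [IsFiniteMeasure μ] : Integrable f μ :=
  (BoundedContinuousFunction.mkOfCompact ⟨f, hf⟩).integrable μ

theorem lowerSemicontinuous_sqIntegralRatio (hu : Continuous u) (hv : Continuous v) :
    LowerSemicontinuous fun μ : ProbabilityMeasure X => sqIntegralRatio u v μ := by
  have hu' : Continuous fun μ : ProbabilityMeasure X => ∫ x, u x ∂μ :=
    ProbabilityMeasure.continuous_integral_continuousMap (⟨u, hu⟩ : C(X, ℝ))
  have hv' : Continuous fun μ : ProbabilityMeasure X => ∫ x, v x ^ 2 ∂μ :=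
    ProbabilityMeasure.continuous_integral_continuousMap (⟨fun x => v x ^ 2, hv.pow 2⟩ : C(X, ℝ))
  exact lowerSemicontinuous_ofReal_sq_div.comp (hu'.prodMk hv')

theorem sqIntegralRatio_smul_add_smul_le (hu : Continuous u) (hv : Continuous v)
    {μ₀ μ₁ : Measure X} [IsFiniteMeasure μ₀] [IsFiniteMeasure μ₁]
    (h₀ : ∫ x, v x ^ 2 ∂μ₀ = 0 → ∫ x, u x ∂μ₀ = 0)
    (h₁ : ∫ x, v x ^ 2 ∂μ₁ = 0 → ∫ x, u x ∂μ₁ = 0)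
    (a b : ℝ≥0) :
    sqIntegralRatio u v (a • μ₀ + b • μ₁) ≤
      a * sqIntegralRatio u v μ₀ + b * sqIntegralRatio u v μ₁ := by
  have hv2 : Continuous fun x => v x ^ 2 := hv.pow 2
  rw [sqIntegralRatio, sqIntegralRatio, sqIntegralRatio,
    integral_smul_add_smul_measure (hu.integrable_of_compactSpace μ₀)
      (hu.integrable_of_compactSpace μ₁),
    integral_smul_add_smul_measure (hv2.integrable_of_compactSpace μ₀)
      (hv2.integrable_of_compactSpace μ₁),
    ← ENNReal.ofReal_coe_nnreal, ← ENNReal.ofReal_coe_nnreal (p := b),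
    ← ENNReal.ofReal_mul a.coe_nonneg, ← ENNReal.ofReal_mul b.coe_nonneg, ← ENNReal.ofReal_add]
  · exact ENNReal.ofReal_le_ofReal <| sq_div_convex_comb_le a.coe_nonneg b.coe_nonneg
      (integral_nonneg fun _ => sq_nonneg _) (integral_nonneg fun _ => sq_nonneg _) h₀ h₁
  all_goals positivity

end SqIntegralRatio

theorem fisher_type_functional_lsc_convex_general
    (X : Type*) [MetricSpace X] [CompactSpace X] [MeasurableSpace X] [BorelSpace X]
    (S : Type*) (h g : S → X → ℝ)
    (hcont : ∀ s, Continuous (h s)) (gcont : ∀ s, Continuous (g s))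
    (J : Measure X → ℝ≥0∞)
    (hJ : ∀ μ : Measure X, J μ =
      sSup {r : ℝ≥0∞ | ∃ s : S, (∫ x, (g s x) ^ 2 ∂μ) ≠ 0 ∧
        r = ENNReal.ofReal ((∫ x, h s x ∂μ) ^ 2 / ∫ x, (g s x) ^ 2 ∂μ)}) :
    (∀ (μs : ℕ → ProbabilityMeasure X) (μ : ProbabilityMeasure X),
      Tendsto μs atTop (𝓝 μ) →
      J (μ : Measure X) ≤ Filter.atTop.liminf fun n => J (μs n : Measure X)) ∧
    ((∀ μ : Measure X, IsProbabilityMeasure μ →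
        ∀ s : S, (∫ x, (g s x) ^ 2 ∂μ) = 0 → (∫ x, h s x ∂μ) = 0) →
      ∀ μ₀ μ₁ : Measure X, IsProbabilityMeasure μ₀ → IsProbabilityMeasure μ₁ →
        ∀ t : ℝ≥0, t ≤ 1 →
        J ((1 - t) • μ₀ + t • μ₁) ≤ (1 - (t : ℝ≥0∞)) * J μ₀ + (t : ℝ≥0∞) * J μ₁) := by
  have hJ' (μ : Measure X) : J μ = ⨆ s, sqIntegralRatio (h s) (g s) μ :=
    (hJ μ).trans (sSup_sqIntegralRatio_eq_iSup h g μ)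
  refine ⟨fun μs μ hμ => ?_, fun hwd μ₀ μ₁ hμ₀ hμ₁ t _ => ?_⟩
  · have hlsc : LowerSemicontinuous fun ν : ProbabilityMeasure X => J ν := by
      simp_rw [hJ']
      exact lowerSemicontinuous_iSup fun s =>
        lowerSemicontinuous_sqIntegralRatio (hcont s) (gcont s)
    exact (hlsc.le_liminf μ).trans hμ.liminf_le_liminf_comp
  · have h1t : ((1 - t : ℝ≥0) : ℝ≥0∞) = 1 - t := by simp
    rw [hJ', hJ', hJ', ← h1t]
    refine iSup_le fun s => (sqIntegralRatio_smul_add_smul_le (hcont s) (gcont s)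
      (hwd μ₀ hμ₀ s) (hwd μ₁ hμ₁ s) _ _).trans ?_
    gcongr <;> exact le_iSup (fun s => sqIntegralRatio (h s) (g s) _) s

/-- Abstract lower semicontinuity and convexity of the supremal Fisher-information-type
functional `J(μ) = sup_s (∫ h_s dμ)² / ∫ g_s² dμ` on a compact metric space:
(1) `J` is lower semicontinuous along weakly convergent sequences of probability
measures; (2) if `∫ g_s² dμ = 0` forces `∫ h_s dμ = 0` for all probability measures,
then `J` is convex. -/
theorem fisher_type_functional_lsc_convex
    (X : Type*) [MetricSpace X] [CompactSpace X] [MeasurableSpace X] [BorelSpace X]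
    (S : Type*) [Nonempty S] (h g : S → X → ℝ)
    (hcont : ∀ s, Continuous (h s)) (gcont : ∀ s, Continuous (g s))
    (J : Measure X → ℝ≥0∞)
    (hJ : ∀ μ : Measure X, J μ =
      sSup {r : ℝ≥0∞ | ∃ s : S, (∫ x, (g s x) ^ 2 ∂μ) ≠ 0 ∧
        r = ENNReal.ofReal ((∫ x, h s x ∂μ) ^ 2 / ∫ x, (g s x) ^ 2 ∂μ)}) :
    (∀ (μs : ℕ → ProbabilityMeasure X) (μ : ProbabilityMeasure X),
      Tendsto μs atTop (𝓝 μ) →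
      J (μ : Measure X) ≤ Filter.atTop.liminf fun n => J (μs n : Measure X)) ∧
    ((∀ μ : Measure X, IsProbabilityMeasure μ →
        ∀ s : S, (∫ x, (g s x) ^ 2 ∂μ) = 0 → (∫ x, h s x ∂μ) = 0) →
      ∀ μ₀ μ₁ : Measure X, IsProbabilityMeasure μ₀ → IsProbabilityMeasure μ₁ →
        ∀ t : ℝ≥0, t ≤ 1 →
        J ((1 - t) • μ₀ + t • μ₁) ≤ (1 - (t : ℝ≥0∞)) * J μ₀ + (t : ℝ≥0∞) * J μ₁) :=
  fisher_type_functional_lsc_convex_general X S h g hcont gcont J hJ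
end

section
/- Let X be a compact metric space, S a nonempty index set, and for each s ∈ S let h_s, g_s : X → ℝ be continuous. For a Borel probability measure μ on X define J(μ) := sup{ (∫ h_s dμ)² / ∫ g_s² dμ : s ∈ S with ∫ g_s² dμ ≠ 0 }, with J(μ) := 0 if no s is admissible (values in [0,∞]). Let 𝓕 be a nonempty set of Borel probability measures on X that is closed under weak convergence. Then J attains its minimum on 𝓕: there exists μ₀ ∈ 𝓕 with J(μ₀) = inf{ J(μ) : μ ∈ 𝓕 }. -/
/-!
The space of Borel probability measures on a compact metric space is compact for the weak
topology (Prokhorov), so the closed set `𝓕` is compact, and it suffices that `J` be lower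
semicontinuous. Each ratio `(∫ h_s)² / ∫ g_s²` is continuous in `μ` on the open set where its
denominator does not vanish and contributes `0` elsewhere, which makes it lower semicontinuous;
a supremum of lower semicontinuous functions is lower semicontinuous.
-/

open MeasureTheory Topology
open scoped ENNReal

theorem ContinuousOn.lowerSemicontinuous_iSup_mem {α β : Type*} [TopologicalSpace α]
    [CompleteLinearOrder β] [TopologicalSpace β] [OrderTopology β] {U : Set α} {f : α → β}
    (hf : ContinuousOn f U) (hU : IsOpen U) :
    LowerSemicontinuous fun a ↦ ⨆ _ : a ∈ U, f a := by
  intro a y hy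
  by_cases ha : a ∈ U
  · simp only [iSup_pos ha] at hy
    filter_upwards [(hf.continuousAt (hU.mem_nhds ha)).lowerSemicontinuousAt y hy,
      hU.mem_nhds ha] with x hx hxU
    rwa [iSup_pos hxU]
  · simp [ha] at hy

theorem lowerSemicontinuous_iSup_ofReal_sq_div {α S : Type*} [TopologicalSpace α]
    {A B : S → α → ℝ} (hA : ∀ s, Continuous (A s)) (hB : ∀ s, Continuous (B s)) :
    LowerSemicontinuous fun a ↦ ⨆ s, ⨆ _ : B s a ≠ 0, ENNReal.ofReal (A s a ^ 2 / B s a) :=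
  lowerSemicontinuous_iSup fun s ↦
    ContinuousOn.lowerSemicontinuous_iSup_mem
      (ENNReal.continuous_ofReal.comp_continuousOn
        (((hA s).pow 2).continuousOn.div (hB s).continuousOn fun _ ha ↦ ha))
      (isOpen_ne_fun (hB s) continuous_const)

theorem sSup_setOf_exists_and_eq {α ι : Type*} [CompleteLattice α] (p : ι → Prop) (f : ι → α) :
    sSup {r | ∃ i, p i ∧ r = f i} = ⨆ i, ⨆ _ : p i, f i := by
  refine le_antisymm (sSup_le ?_) (iSup₂_le fun i hi ↦ le_sSup ⟨i, hi, rfl⟩)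
  rintro _ ⟨i, hi, rfl⟩
  exact le_iSup₂ (f := fun i (_ : p i) ↦ f i) i hi

theorem fisher_type_functional_min_attained_general
    (X : Type*) [MetricSpace X] [CompactSpace X] [MeasurableSpace X] [BorelSpace X]
    (S : Type*) (h g : S → X → ℝ)
    (hcont : ∀ s, Continuous (h s)) (gcont : ∀ s, Continuous (g s))
    (J : ProbabilityMeasure X → ℝ≥0∞)
    (hJ : ∀ μ : ProbabilityMeasure X, J μ =
      sSup {r : ℝ≥0∞ | ∃ s : S, (∫ x, (g s x) ^ 2 ∂(μ : Measure X)) ≠ 0 ∧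
        r = ENNReal.ofReal ((∫ x, h s x ∂(μ : Measure X)) ^ 2
          / ∫ x, (g s x) ^ 2 ∂(μ : Measure X))})
    (𝓕 : Set (ProbabilityMeasure X)) (h𝓕 : 𝓕.Nonempty) (hcl : IsClosed 𝓕) :
    ∃ μ₀ ∈ 𝓕, J μ₀ = ⨅ μ ∈ 𝓕, J μ := by
  have hJ_lsc : LowerSemicontinuous J := by
    simp only [funext hJ, sSup_setOf_exists_and_eq]
    exact lowerSemicontinuous_iSup_ofReal_sq_div
      (fun s ↦ ProbabilityMeasure.continuous_integral_continuousMap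
        (⟨h s, hcont s⟩ : C(X, ℝ)))
      (fun s ↦ ProbabilityMeasure.continuous_integral_continuousMap
        (⟨fun x ↦ g s x ^ 2, (gcont s).pow 2⟩ : C(X, ℝ)))
  obtain ⟨μ₀, hμ₀, hmin⟩ := (hJ_lsc.lowerSemicontinuousOn 𝓕).exists_isMinOn h𝓕 hcl.isCompact
  exact ⟨μ₀, hμ₀, le_antisymm (le_iInf₂ fun μ hμ ↦ hmin hμ) (iInf₂_le μ₀ hμ₀)⟩

/-- The supremal Fisher-information-type functional
`J(μ) = sup_s (∫ h_s dμ)² / ∫ g_s² dμ` attains its minimum on any nonempty weakly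
closed set of Borel probability measures on a compact metric space. -/
theorem fisher_type_functional_min_attained
    (X : Type*) [MetricSpace X] [CompactSpace X] [MeasurableSpace X] [BorelSpace X]
    (S : Type*) [Nonempty S] (h g : S → X → ℝ)
    (hcont : ∀ s, Continuous (h s)) (gcont : ∀ s, Continuous (g s))
    (J : ProbabilityMeasure X → ℝ≥0∞)
    (hJ : ∀ μ : ProbabilityMeasure X, J μ =
      sSup {r : ℝ≥0∞ | ∃ s : S, (∫ x, (g s x) ^ 2 ∂(μ : Measure X)) ≠ 0 ∧
        r = ENNReal.ofReal ((∫ x, h s x ∂(μ : Measure X)) ^ 2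
          / ∫ x, (g s x) ^ 2 ∂(μ : Measure X))})
    (𝓕 : Set (ProbabilityMeasure X)) (h𝓕 : 𝓕.Nonempty) (hcl : IsClosed 𝓕) :
    ∃ μ₀ ∈ 𝓕, J μ₀ = ⨅ μ ∈ 𝓕, J μ :=
  fisher_type_functional_min_attained_general X S h g hcont gcont J hJ 𝓕 h𝓕 hcl
end
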